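/- arXiv:1503.05650 — 6 statements merged into one kernel-verified Lean document; each statement's English description precedes it below -/
import Mathlib

section
/- Let k and l be odd coprime positive integers with 0 < l < k. Then (2^k + 1)(2^l + 1) does not divide 2^{lk} + 1. -/
theorem not_dvd_prod (k l : ℕ) (hk : Odd k) (hl : Odd l) (hl0 : 0 < l) (hlk : l < k)
    (hco : Nat.Coprime k l) :
    ¬ ((2 ^ k + 1) * (2 ^ l + 1) ∣ 2 ^ (l * k) + 1) := by
  intro h
  haveI : Fact (Nat.Prime 3) := ⟨by norm_num⟩
  have hodd3 : Odd 3 := by decide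
  have hxy : 3 ∣ 2 + 1 := by norm_num
  have hx : ¬ (3 ∣ 2) := by norm_num
  have hk0 : 0 < k := lt_trans hl0 hlk
  have hv : ∀ n : ℕ, Odd n → padicValNat 3 (2 ^ n + 1) = 1 + padicValNat 3 n := by
    intro n hn
    have := padicValNat.pow_add_pow (x := 2) (y := 1) (p := 3) hodd3 hxy hx hn
    simpa using this
  have hmulodd : Odd (l * k) := hl.mul hk
  have hv1 := hv k hk
  have hv2 := hv l hl
  have hv3 := hv (l * k) hmulodd
  have hne : 2 ^ (l * k) + 1 ≠ 0 := by positivity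
  have hdvd : (3 : ℕ) ^ padicValNat 3 ((2 ^ k + 1) * (2 ^ l + 1)) ∣ 2 ^ (l * k) + 1 :=
    dvd_trans pow_padicValNat_dvd h
  have hle : padicValNat 3 ((2 ^ k + 1) * (2 ^ l + 1)) ≤ padicValNat 3 (2 ^ (l * k) + 1) :=
    (padicValNat_dvd_iff_le hne).mp hdvd
  have ha : (2 ^ k + 1 : ℕ) ≠ 0 := by positivity
  have hb : (2 ^ l + 1 : ℕ) ≠ 0 := by positivity
  rw [padicValNat.mul ha hb, hv1, hv2, hv3,
    padicValNat.mul (by omega) (by omega)] at hle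
  omega
end

section
/- Let k and l be odd coprime positive integers with 0 < l < k, m = 2k, q = 2^m, g a primitive element of GF(q), r = g^{2^k - 1}, and d = (2^{lk}+1)/(2^l+1). Then δ = r^d is a primitive element of GF(4) ⊆ GF(q); in particular δ² = δ + 1 = δ^{-1} and δ ≠ 1. -/
/-!
Put `N = 2^k + 1` and `L = 2^l + 1`. Since `g` has order `2^(2k) - 1 = (2^k - 1) N`, the element
`r` has order `N`, so `δ = r^d` has order dividing `N`; and `δ^L = r^(2^(lk) + 1) = 1` because
`N ∣ 2^(lk) + 1`. Hence the order of `δ` divides `gcd(N, L)`, which divides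
`gcd(2^(2k) - 1, 2^(2l) - 1) = 2^(2 gcd(k, l)) - 1 = 3`. It is not `1`: by the lifting-the-exponent
lemma `v₃(d) = v₃(k) < v₃(N)`, so `N ∤ d`. An element of order `3` in characteristic `2` is a
root of `X² + X + 1`.
-/

lemma two_pow_two_mul_sub_one (n : ℕ) : 2 ^ (2 * n) - 1 = (2 ^ n + 1) * (2 ^ n - 1) := by
  rw [pow_mul', ← Nat.sq_sub_sq, one_pow]

lemma Nat.Coprime.gcd_two_pow_add_one_dvd_three {a b : ℕ} (h : a.Coprime b) :
    Nat.gcd (2 ^ a + 1) (2 ^ b + 1) ∣ 3 := by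
  have hdvd (n : ℕ) : 2 ^ n + 1 ∣ 2 ^ (2 * n) - 1 :=
    two_pow_two_mul_sub_one n ▸ Dvd.intro _ rfl
  have h3 : Nat.gcd (2 ^ (2 * a) - 1) (2 ^ (2 * b) - 1) = 3 := by
    rw [Nat.pow_sub_one_gcd_pow_sub_one, Nat.gcd_mul_left, h.gcd_eq_one, mul_one]; rfl
  exact h3 ▸ Nat.dvd_gcd ((Nat.gcd_dvd_left _ _).trans (hdvd a))
    ((Nat.gcd_dvd_right _ _).trans (hdvd b))

lemma padicValNat_three_two_pow_add_one {n : ℕ} (hn : Odd n) :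
    padicValNat 3 (2 ^ n + 1) = padicValNat 3 n + 1 := by
  have h := padicValNat.pow_add_pow (p := 3) (x := 2) (y := 1)
    (by norm_num) (by norm_num) (by norm_num) hn
  rw [one_pow, padicValNat_self] at h
  omega

lemma two_pow_add_one_dvd_two_pow_mul_add_one {l k : ℕ} (hk : Odd k) :
    2 ^ l + 1 ∣ 2 ^ (l * k) + 1 := by
  simpa [pow_mul] using hk.nat_add_dvd_pow_add_pow (2 ^ l) 1

lemma padicValNat_three_two_pow_mul_add_one_div {k l : ℕ} (hk : Odd k) (hl : Odd l) :
    padicValNat 3 ((2 ^ (l * k) + 1) / (2 ^ l + 1)) = padicValNat 3 k := by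
  rw [padicValNat.div_of_dvd (two_pow_add_one_dvd_two_pow_mul_add_one hk),
    padicValNat_three_two_pow_add_one (hl.mul hk), padicValNat_three_two_pow_add_one hl,
    padicValNat.mul hl.pos.ne' hk.pos.ne']
  omega

lemma not_two_pow_add_one_dvd_div {k l : ℕ} (hk : Odd k) (hl : Odd l) :
    ¬ 2 ^ k + 1 ∣ (2 ^ (l * k) + 1) / (2 ^ l + 1) := by
  intro hN
  have hd0 : (2 ^ (l * k) + 1) / (2 ^ l + 1) ≠ 0 :=
    (Nat.div_pos (Nat.le_of_dvd (by positivity) (two_pow_add_one_dvd_two_pow_mul_add_one hk))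
      (by positivity)).ne'
  have hle := (padicValNat_dvd_iff_le (p := 3) hd0).mp (pow_padicValNat_dvd.trans hN)
  rw [padicValNat_three_two_pow_add_one hk, padicValNat_three_two_pow_mul_add_one_div hk hl] at hle
  omega

lemma orderOf_pow_two_pow_mul_add_one_div {G : Type*} [Monoid G] {r : G} {k l : ℕ}
    (hk : Odd k) (hl : Odd l) (hco : k.Coprime l) (hr : orderOf r = 2 ^ k + 1) :
    orderOf (r ^ ((2 ^ (l * k) + 1) / (2 ^ l + 1))) = 3 := by
  set d := (2 ^ (l * k) + 1) / (2 ^ l + 1)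
  have hN : (r ^ d) ^ (2 ^ k + 1) = 1 := by
    rw [← pow_mul, mul_comm, pow_mul, ← hr, pow_orderOf_eq_one, one_pow]
  have hL : (r ^ d) ^ (2 ^ l + 1) = 1 := by
    rw [← pow_mul, mul_comm, Nat.mul_div_cancel' (two_pow_add_one_dvd_two_pow_mul_add_one hk),
      ← orderOf_dvd_iff_pow_eq_one, hr, mul_comm]
    exact two_pow_add_one_dvd_two_pow_mul_add_one hl
  refine orderOf_eq_prime ?_ fun h => not_two_pow_add_one_dvd_div hk hl ?_
  · exact orderOf_dvd_iff_pow_eq_one.mp <| (Nat.dvd_gcd (orderOf_dvd_of_pow_eq_one hN)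
      (orderOf_dvd_of_pow_eq_one hL)).trans hco.gcd_two_pow_add_one_dvd_three
  · exact hr ▸ orderOf_dvd_of_pow_eq_one h

lemma FiniteField.orderOf_eq_card_sub_one_of_forall_eq_pow {F : Type*} [Field F] [Fintype F]
    {g : F} (hcard : 2 < Fintype.card F) (hg : ∀ x : F, x ≠ 0 → ∃ n : ℕ, x = g ^ n) :
    orderOf g = Fintype.card F - 1 := by
  classical
  have hg0 : g ≠ 0 := by
    rintro rfl
    have hF : (Finset.univ : Finset F) ⊆ {0, 1} := fun x _ => by
      by_cases hx : x = 0
      · simp [hx]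
      · obtain ⟨n, rfl⟩ := hg x hx
        rcases n with _ | n <;> simp
    exact hcard.not_ge ((Finset.card_le_card hF).trans Finset.card_le_two)
  have hgen (u : Fˣ) : u ∈ Subgroup.zpowers (Units.mk0 g hg0) := by
    obtain ⟨n, hn⟩ := hg u u.ne_zero
    exact ⟨n, Units.ext (by simp [hn])⟩
  rw [← Units.val_mk0 hg0, orderOf_units, orderOf_eq_card_of_forall_mem_zpowers hgen,
    Nat.card_units, Nat.card_eq_fintype_card]

lemma CharTwo.sq_eq_add_one_of_orderOf_eq_three {F : Type*} [Field F] [CharP F 2] {x : F}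
    (hx : orderOf x = 3) : x ^ 2 = x + 1 ∧ x + 1 = x⁻¹ := by
  have h2 : (2 : F) = 0 := CharTwo.two_eq_zero
  have hx1 : x - 1 ≠ 0 := sub_ne_zero.mpr fun h => by simp [h] at hx
  have hx3 : x ^ 3 = 1 := hx ▸ pow_orderOf_eq_one x
  have hroot : x ^ 2 + x + 1 = 0 :=
    (mul_eq_zero.mp (by linear_combination hx3 : (x - 1) * (x ^ 2 + x + 1) = 0)).resolve_left hx1
  refine ⟨by linear_combination hroot - (x + 1) * h2, eq_inv_of_mul_eq_one_left ?_⟩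
  linear_combination hroot - h2

theorem delta_primitive_in_GF4_general (k l : ℕ) (hk : Odd k) (hl : Odd l)
    (hco : Nat.Coprime k l)
    (F : Type) [Field F] [Fintype F] (hF : Fintype.card F = 2 ^ (2 * k))
    (g : F) (hg : ∀ x : F, x ≠ 0 → ∃ n : ℕ, x = g ^ n)
    (r : F) (hr : r = g ^ (2 ^ k - 1))
    (d : ℕ) (hd : d = (2 ^ (l * k) + 1) / (2 ^ l + 1)) :
    (r ^ d) ^ 2 = r ^ d + 1 ∧ r ^ d + 1 = (r ^ d)⁻¹ ∧ r ^ d ≠ 1 := by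
  have : CharP F 2 := charP_of_card_eq_prime_pow hF
  have hcard : 2 < Fintype.card F :=
    hF ▸ (by norm_num : 2 < 2 ^ 2).trans_le (Nat.pow_le_pow_right two_pos (by linarith [hk.pos]))
  have hg_ord : orderOf g = (2 ^ k - 1) * (2 ^ k + 1) := by
    rw [FiniteField.orderOf_eq_card_sub_one_of_forall_eq_pow hcard hg, hF,
      two_pow_two_mul_sub_one, mul_comm]
  have hr_ord : orderOf r = 2 ^ k + 1 := by
    have hpos : 2 ^ k - 1 ≠ 0 := (Nat.sub_pos_of_lt (Nat.one_lt_two_pow hk.pos.ne')).ne'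
    rw [hr, orderOf_pow_of_dvd hpos (hg_ord ▸ dvd_mul_right _ _), hg_ord,
      Nat.mul_div_cancel_left _ (Nat.pos_of_ne_zero hpos)]
  have hδ : orderOf (r ^ d) = 3 := hd ▸ orderOf_pow_two_pow_mul_add_one_div hk hl hco hr_ord
  obtain ⟨hsq, hinv⟩ := CharTwo.sq_eq_add_one_of_orderOf_eq_three hδ
  exact ⟨hsq, hinv, fun h => by simp [h] at hδ⟩

theorem delta_primitive_in_GF4 (k l : ℕ) (hk : Odd k) (hl : Odd l) (hl0 : 0 < l)
    (hlk : l < k) (hco : Nat.Coprime k l)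
    (F : Type) [Field F] [Fintype F] (hF : Fintype.card F = 2 ^ (2 * k))
    (g : F) (hg : ∀ x : F, x ≠ 0 → ∃ n : ℕ, x = g ^ n)
    (r : F) (hr : r = g ^ (2 ^ k - 1))
    (d : ℕ) (hd : d = (2 ^ (l * k) + 1) / (2 ^ l + 1)) :
    (r ^ d) ^ 2 = r ^ d + 1 ∧ r ^ d + 1 = (r ^ d)⁻¹ ∧ r ^ d ≠ 1 :=
  delta_primitive_in_GF4_general k l hk hl hco F hF g hg r hr d hd
end

section
/- Let k, l be odd coprime with 0 < l < k, m = 2k, q = 2^m, and for a, b ∈ GF(q) define T(a,b) = ∑_{x ∈ GF(q)} (-1)^{Tr_m(a x^{2^l+1} + b x^{2^k+1})}. Then T(a,b) ≡ 1 (mod 3) for all a, b ∈ GF(q). -/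
open MulAction in
lemma card_invariant_modEq_aux (F : Type) [Field F] [Fintype F] (ω : F) (hω3 : ω ^ 3 = 1)
    (hω1 : ω ≠ 1) (P : F → Prop) [DecidablePred P] (h0 : P 0)
    (hinv : ∀ x, P x → P (ω * x)) :
    (3 : ℤ) ∣ (Fintype.card {x // P x} : ℤ) - 1 := by
  classical
  have hpow : ∀ (n : ℕ) (x : F), P x → P (ω ^ n * x) := by
    intro n
    induction n with
    | zero => intro x hx; simpa using hx
    | succ n ih =>
      intro x hx
      have h := hinv _ (ih x hx)
      rw [← mul_assoc] at h
      rw [pow_succ, mul_comm (ω ^ n) ω]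
      exact h
  letI : SMul (Multiplicative (ZMod 3)) {x // P x} :=
    ⟨fun z x => ⟨ω ^ (z.toAdd.val) * x, hpow _ _ x.2⟩⟩
  have smul_def : ∀ (z : Multiplicative (ZMod 3)) (x : {x // P x}),
      ((z • x : {x // P x}) : F) = ω ^ (z.toAdd.val) * x := fun _ _ => rfl
  letI : MulAction (Multiplicative (ZMod 3)) {x // P x} :=
    { one_smul := by
        intro x; apply Subtype.ext; rw [smul_def]
        have : (Multiplicative.toAdd (1 : Multiplicative (ZMod 3))).val = 0 := rfl
        rw [this, pow_zero, one_mul]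
      mul_smul := by
        intro z1 z2 x; apply Subtype.ext
        rw [smul_def, smul_def, smul_def]
        have h : (Multiplicative.toAdd (z1 * z2)).val
            = ((Multiplicative.toAdd z1).val + (Multiplicative.toAdd z2).val) % 3 := by
          rw [toAdd_mul, ZMod.val_add]
        rw [h, ← pow_eq_pow_mod _ hω3, pow_add, mul_assoc] }
  haveI : Fact (Nat.Prime 3) := ⟨by norm_num⟩
  have hP : IsPGroup 3 (Multiplicative (ZMod 3)) :=
    IsPGroup.of_card (n := 1) (by simp [Nat.card_eq_fintype_card])
  have hmod := hP.card_modEq_card_fixedPoints {x // P x}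
  have hfix : fixedPoints (Multiplicative (ZMod 3)) {x // P x} = {⟨0, h0⟩} := by
    ext x
    simp only [mem_fixedPoints, Set.mem_singleton_iff]
    constructor
    · intro h
      have h1 := congrArg Subtype.val (h (Multiplicative.ofAdd 1))
      rw [smul_def] at h1
      have hv : ((Multiplicative.toAdd (Multiplicative.ofAdd (1 : ZMod 3)))).val = 1 := rfl
      rw [hv, pow_one] at h1
      have hx0 : (x : F) = 0 := by
        by_contra hx
        exact hω1 (mul_right_cancel₀ hx (by rw [h1, one_mul]))
      exact Subtype.ext hx0
    · rintro rfl
      intro z; apply Subtype.ext; rw [smul_def]; simp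
  rw [hfix] at hmod
  simp only [Nat.card_eq_fintype_card] at hmod
  have h1 : Fintype.card ({⟨0, h0⟩} : Set {x // P x}) = 1 := by simp
  rw [h1] at hmod
  have := hmod.dvd
  omega

theorem T_congruent_one_mod_three (k l : ℕ) (hk : Odd k) (hl : Odd l) (hl0 : 0 < l)
    (hlk : l < k) (hco : Nat.Coprime k l)
    (F : Type) [Field F] [Fintype F] [Algebra (ZMod 2) F]
    (hF : Fintype.card F = 2 ^ (2 * k)) :
    ∀ a b : F, (3 : ℤ) ∣
      (∑ x : F, (if Algebra.trace (ZMod 2) F (a * x ^ (2 ^ l + 1) + b * x ^ (2 ^ k + 1)) = 0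
        then (1 : ℤ) else -1)) - 1 := by
  classical
  intro a b
  -- 3 divides 2^(2k) - 1 = 4^k - 1
  have h4 : (2 : ℕ) ^ (2 * k) = 4 ^ k := by rw [pow_mul]; norm_num
  have hq3 : (3 : ℕ) ∣ 2 ^ (2 * k) - 1 := by
    rw [h4]
    simpa using Nat.sub_dvd_pow_sub_pow 4 1 k
  -- get ω of order 3
  have hdvd : (3 : ℕ) ∣ Fintype.card Fˣ := by
    rw [Fintype.card_units, hF]
    exact hq3
  haveI : Fact (Nat.Prime 3) := ⟨by norm_num⟩
  obtain ⟨u, hu⟩ := exists_prime_orderOf_dvd_card 3 hdvd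
  set ω : F := (u : F) with hωdef
  have hω3 : ω ^ 3 = 1 := by
    have h : u ^ 3 = 1 := by rw [← hu]; exact pow_orderOf_eq_one u
    calc ω ^ 3 = ((u ^ 3 : Fˣ) : F) := by push_cast; ring
    _ = 1 := by rw [h]; rfl
  have hω1 : ω ≠ 1 := by
    intro h
    have : u = 1 := Units.ext h
    rw [this, orderOf_one] at hu
    norm_num at hu
  -- 3 ∣ 2^j + 1 for odd j
  have hodd : ∀ j : ℕ, Odd j → (3 : ℕ) ∣ 2 ^ j + 1 := by
    intro j hj
    have : ((2 ^ j + 1 : ℕ) : ZMod 3) = 0 := by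
      push_cast
      have h2 : (2 : ZMod 3) = -1 := by rfl
      rw [h2, hj.neg_one_pow]
      ring
    exact (ZMod.natCast_eq_zero_iff _ _).mp this
  have hωe : ∀ j : ℕ, Odd j → ω ^ (2 ^ j + 1) = 1 := by
    intro j hj
    obtain ⟨c, hc⟩ := hodd j hj
    rw [hc, pow_mul, hω3, one_pow]
  set P : F → Prop :=
    fun x => Algebra.trace (ZMod 2) F (a * x ^ (2 ^ l + 1) + b * x ^ (2 ^ k + 1)) = 0 with hP
  have hinv : ∀ x, P x → P (ω * x) := by
    intro x hx
    show Algebra.trace (ZMod 2) F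
      (a * (ω * x) ^ (2 ^ l + 1) + b * (ω * x) ^ (2 ^ k + 1)) = 0
    rw [mul_pow, mul_pow, hωe l hl, hωe k hk, one_mul, one_mul]
    exact hx
  have h0 : P 0 := by
    have hz : (0 : F) ^ (2 ^ l + 1) = 0 := zero_pow (Nat.add_one_ne_zero _)
    have hz' : (0 : F) ^ (2 ^ k + 1) = 0 := zero_pow (Nat.add_one_ne_zero _)
    show Algebra.trace (ZMod 2) F
      (a * (0:F) ^ (2 ^ l + 1) + b * (0:F) ^ (2 ^ k + 1)) = 0
    rw [hz, hz', mul_zero, mul_zero, add_zero, map_zero]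
  have hcard := card_invariant_modEq_aux F ω hω3 hω1 P h0 hinv
  -- rewrite the sum
  have hsum : (∑ x : F, if P x then (1 : ℤ) else -1)
      = ((Finset.univ.filter P).card : ℤ) - ((Finset.univ.filter fun x => ¬ P x).card : ℤ) := by
    rw [Finset.sum_ite, Finset.sum_const, Finset.sum_const]
    push_cast
    ring
  have hcards : (Finset.univ.filter P).card + (Finset.univ.filter fun x => ¬ P x).card
      = 2 ^ (2 * k) := by
    rw [Finset.card_filter_add_card_filter_not, ← hF]
    exact Finset.card_univ
  have hsub : Fintype.card {x // P x} = (Finset.univ.filter P).card := Fintype.card_subtype _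
  rw [hsub] at hcard
  show (3 : ℤ) ∣ (∑ x : F, if P x then (1 : ℤ) else -1) - 1
  rw [hsum]
  have hq3' : (3 : ℤ) ∣ ((2 : ℤ) ^ (2 * k)) - 1 := by
    have := Int.natCast_dvd_natCast.mpr hq3
    have h1 : (1 : ℕ) ≤ 2 ^ (2 * k) := Nat.one_le_two_pow
    push_cast [h1] at this
    exact this
  have hc' : ((Finset.univ.filter P).card : ℤ)
      + ((Finset.univ.filter fun x => ¬ P x).card : ℤ) = (2 : ℤ) ^ (2 * k) := by
    exact_mod_cast congrArg (Nat.cast : ℕ → ℤ) hcards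
  obtain ⟨q, hq⟩ : ∃ q : ℤ, (2 : ℤ) ^ (2 * k) = q := ⟨_, rfl⟩
  rw [hq] at hq3' hc'
  omega
end

section
/- Let k be odd, m = 2k, q = 2^m, and assume 3 | 2^k + 1. Then ∑_{x ∈ GF(q)*} (-1)^{Tr_m(x^{(2^k+1)/3})} = 2^k(2^k-2)/3 - 1. -/
open Finset Polynomial

private lemma sum_split (k : ℕ) (F : Type) [Field F] (z : F) :
    ∑ i ∈ Finset.range (2 * k), z ^ 2 ^ i
      = (∑ i ∈ Finset.range k, z ^ 2 ^ i) + ∑ i ∈ Finset.range k, z ^ 2 ^ (k + i) := by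
  rw [two_mul]
  calc ∑ i ∈ Finset.range (k + k), z ^ 2 ^ i
      = ∑ i ∈ Finset.Ico 0 k, z ^ 2 ^ i + ∑ i ∈ Finset.Ico k (k + k), z ^ 2 ^ i := by
        rw [Finset.range_eq_Ico, Finset.sum_Ico_consecutive _ (Nat.zero_le k) (Nat.le_add_right k k)]
    _ = _ := by
        congr 1
        · rw [← Finset.range_eq_Ico]
        · rw [Finset.sum_Ico_eq_sum_range]
          simp

private lemma tau_subfield (k : ℕ) (F : Type) [Field F] [CharP F 2] (w : F)
    (hw : w ^ 2 ^ k = w) : ∑ i ∈ Finset.range (2 * k), w ^ 2 ^ i = 0 := by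
  rw [sum_split]
  have h2 : ∀ i, w ^ 2 ^ (k + i) = w ^ 2 ^ i := by
    intro i
    rw [pow_add, pow_mul, hw]
  rw [Finset.sum_congr rfl (fun i _ => h2 i)]
  exact CharTwo.add_self_eq_zero _

private lemma tau_omega (k : ℕ) (F : Type) [Field F] [CharP F 2]
    (h2k : 2 ^ k % 3 = 2) (ω w : F) (hω3 : ω ^ 3 = 1) (hω : ω ≠ 1)
    (hw : w ^ 2 ^ k = w) :
    ∑ i ∈ Finset.range (2 * k), (ω * w) ^ 2 ^ i = ∑ i ∈ Finset.range k, w ^ 2 ^ i := by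
  have h2F : (2 : F) = 0 := CharTwo.two_eq_zero
  have key : ∀ ν : F, ν ^ 3 = 1 → ν ≠ 1 → ν + ν ^ 2 ^ k = 1 := by
    intro ν h3 h1
    have hquad : ν ^ 2 + ν + 1 = 0 := by
      have hfac : (ν + 1) * (ν ^ 2 + ν + 1) = 0 := by
        linear_combination h3 + (ν ^ 2 + ν + 1) * h2F
      rcases mul_eq_zero.1 hfac with h | h
      · exact absurd (by rw [eq_neg_of_add_eq_zero_left h, CharTwo.neg_eq]) h1
      · exact h
    have hpow : ν ^ 2 ^ k = ν ^ 2 := by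
      have hdm := Nat.div_add_mod (2 ^ k) 3
      rw [h2k] at hdm
      rw [← hdm, pow_add, pow_mul, h3, one_pow, one_mul]
    rw [hpow]
    linear_combination hquad - h2F
  rw [sum_split]
  have h2 : ∀ i, (ω * w) ^ 2 ^ (k + i) = (ω ^ 2 ^ i) ^ 2 ^ k * w ^ 2 ^ i := by
    intro i
    have e1 : (2 : ℕ) ^ (k + i) = 2 ^ i * 2 ^ k := by rw [pow_add, mul_comm]
    rw [e1, pow_mul, mul_pow, mul_pow, pow_right_comm w, hw]
  rw [Finset.sum_congr rfl (fun i _ => h2 i), ← Finset.sum_add_distrib]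
  apply Finset.sum_congr rfl
  intro i _
  have hν3 : (ω ^ 2 ^ i) ^ 3 = 1 := by rw [← pow_mul, mul_comm, pow_mul, hω3, one_pow]
  have hν1 : ω ^ 2 ^ i ≠ 1 := by
    intro h1
    apply hω
    have hd1 : orderOf ω ∣ 3 := orderOf_dvd_of_pow_eq_one hω3
    have hd2 : orderOf ω ∣ 2 ^ i := orderOf_dvd_of_pow_eq_one h1
    have hcop : Nat.Coprime 3 (2 ^ i) := Nat.Coprime.pow_right _ (by decide)
    have : orderOf ω ∣ 1 := Nat.dvd_gcd hd1 hd2 |>.trans (by rw [hcop])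
    rwa [Nat.dvd_one, orderOf_eq_one_iff] at this
  have hkey := key (ω ^ 2 ^ i) hν3 hν1
  rw [mul_pow]
  linear_combination (w ^ 2 ^ i) * hkey

private lemma sigma_zero_or_one (k : ℕ) (F : Type) [Field F] [CharP F 2] (w : F)
    (hw : w ^ 2 ^ k = w) :
    (∑ i ∈ Finset.range k, w ^ 2 ^ i) = 0 ∨ (∑ i ∈ Finset.range k, w ^ 2 ^ i) = 1 := by
  set s := ∑ i ∈ Finset.range k, w ^ 2 ^ i with hs
  have hsq : s ^ 2 = s := by
    rw [hs, CharTwo.sum_sq]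
    have hterm : ∀ i, (w ^ 2 ^ i) ^ 2 = w ^ 2 ^ (i + 1) := by
      intro i; rw [← pow_mul, ← pow_succ]
    rw [Finset.sum_congr rfl (fun i _ => hterm i)]
    have h1 := Finset.sum_range_succ (fun i => w ^ 2 ^ i) k
    have h2 := Finset.sum_range_succ' (fun i => w ^ 2 ^ i) k
    rw [h1, hw] at h2
    rw [pow_zero, pow_one] at h2
    exact add_right_cancel h2.symm
  have hfac : s * (s - 1) = 0 := by linear_combination hsq
  rcases mul_eq_zero.1 hfac with h | h
  · exact Or.inl h
  · exact Or.inr (sub_eq_zero.1 h)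

private lemma card_root_filter_le (F : Type) [Field F] [DecidableEq F]
    (Q : Polynomial F) (hQ : Q ≠ 0) (s : Finset F) (hs : ∀ w ∈ s, Q.eval w = 0) :
    s.card ≤ Q.natDegree := by
  calc s.card ≤ Q.roots.toFinset.card := by
        apply Finset.card_le_card
        intro w hw
        rw [Multiset.mem_toFinset, Polynomial.mem_roots hQ]
        exact hs w hw
    _ ≤ Multiset.card Q.roots := Multiset.toFinset_card_le _
    _ ≤ Q.natDegree := Polynomial.card_roots' _

private lemma count_sigma (k : ℕ) (hk : Odd k) (F : Type) [Field F] [Fintype F]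
    [DecidableEq F] [CharP F 2] (U : F)
    (hUord : orderOf U = 2 ^ k - 1) (hU0 : U ≠ 0) :
    ((Finset.range (2 ^ k - 1)).filter
      (fun b => ∑ i ∈ Finset.range k, (U ^ b) ^ 2 ^ i = 0)).card = 2 ^ (k - 1) - 1 := by
  have hk1 : 1 ≤ k := hk.pos
  have h2k2 : 2 ≤ 2 ^ k := by
    calc 2 = 2 ^ 1 := (pow_one 2).symm
    _ ≤ 2 ^ k := Nat.pow_le_pow_right (by norm_num) hk1
  set m := 2 ^ k - 1 with hm
  have hm1 : m + 1 = 2 ^ k := by omega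
  have hUm : U ^ m = 1 := by rw [← hUord]; exact pow_orderOf_eq_one U
  have hWmem : ∀ b : ℕ, (U ^ b) ^ 2 ^ k = U ^ b := by
    intro b
    rw [pow_right_comm, ← hm1, pow_succ, hUm, one_mul]
  set σ : F → F := fun w => ∑ i ∈ Finset.range k, w ^ 2 ^ i with hσ
  set W : Finset F := Finset.univ.filter (fun w => w ^ 2 ^ k = w) with hW
  have h0W : (0 : F) ∈ W := by
    simp [hW, zero_pow (by positivity : (2:ℕ) ^ k ≠ 0)]
  set A : Finset F := (Finset.range m).image (U ^ ·) with hA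
  have hinjU : Set.InjOn (U ^ ·) (Finset.range m) := by
    intro a ha b hb hab
    exact pow_injOn_Iio_orderOf (by simpa [hUord] using Finset.mem_range.1 ha)
      (by simpa [hUord] using Finset.mem_range.1 hb) hab
  have hcardA : A.card = m := by
    rw [hA, Finset.card_image_of_injOn hinjU, Finset.card_range]
  have hAW : A ⊆ W.erase 0 := by
    intro w hw
    rw [hA, Finset.mem_image] at hw
    obtain ⟨b, _, rfl⟩ := hw
    rw [Finset.mem_erase]
    exact ⟨pow_ne_zero _ hU0, by simp [hW, hWmem b]⟩
  have hWcard : W.card = 2 ^ k := by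
    apply le_antisymm
    · calc W.card ≤ (X ^ 2 ^ k - X : F[X]).natDegree := by
            apply card_root_filter_le F _ (FiniteField.X_pow_card_sub_X_ne_zero F h2k2) W
            intro w hw
            rw [hW, Finset.mem_filter] at hw
            simp [sub_eq_zero, hw.2]
        _ = 2 ^ k := FiniteField.X_pow_card_sub_X_natDegree_eq F h2k2
    · have hins : insert (0 : F) A ⊆ W := by
        intro w hw
        rcases Finset.mem_insert.1 hw with rfl | hw
        · exact h0W
        · exact Finset.mem_of_mem_erase (hAW hw)
      have h0A : (0 : F) ∉ A := fun h => (Finset.mem_erase.1 (hAW h)).1 rfl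
      calc 2 ^ k = m + 1 := hm1.symm
        _ = (insert (0 : F) A).card := by rw [Finset.card_insert_of_notMem h0A, hcardA]
        _ ≤ W.card := Finset.card_le_card hins
  have hAeq : A = W.erase 0 := by
    apply Finset.eq_of_subset_of_card_le hAW
    rw [Finset.card_erase_of_mem h0W, hWcard, hcardA]
  -- polynomial bounds
  set P : F[X] := ∑ i ∈ Finset.range k, X ^ 2 ^ i with hP
  have hPeval : ∀ w : F, P.eval w = σ w := by
    intro w
    rw [hP, Polynomial.eval_finset_sum]
    simp [hσ]
  have hPdeg : P.natDegree ≤ 2 ^ (k - 1) := by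
    apply Polynomial.natDegree_sum_le_of_forall_le
    intro i hi
    rw [Polynomial.natDegree_X_pow]
    have hik := Finset.mem_range.1 hi
    exact Nat.pow_le_pow_right (by norm_num) (by omega)
  have hkF : ((k : ℕ) : F) = 1 := by
    obtain ⟨t, ht⟩ := hk
    have h2F : (2 : F) = 0 := CharTwo.two_eq_zero
    rw [ht]
    push_cast
    rw [h2F]
    ring
  have hPne : P ≠ 0 := by
    intro h
    have : P.eval 1 = 0 := by rw [h, Polynomial.eval_zero]
    rw [hPeval] at this
    simp only [hσ, one_pow, Finset.sum_const, Finset.card_range, nsmul_eq_mul, mul_one] at this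
    rw [hkF] at this
    exact one_ne_zero this
  have hσ0 : σ 0 = 0 := by
    simp only [hσ]
    exact Finset.sum_eq_zero fun i _ => zero_pow (by positivity : (2:ℕ) ^ i ≠ 0)
  have hQne : P + 1 ≠ 0 := by
    intro h
    have h0 : (P + 1).eval 0 = 0 := by rw [h, Polynomial.eval_zero]
    rw [Polynomial.eval_add, Polynomial.eval_one, hPeval, hσ0] at h0
    simp at h0
  have hcount0 : (W.filter (fun w => σ w = 0)).card ≤ 2 ^ (k - 1) := by
    refine le_trans (card_root_filter_le F P hPne _ ?_) hPdeg
    intro w hw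
    rw [hPeval]
    exact (Finset.mem_filter.1 hw).2
  have hcount1 : (W.filter (fun w => ¬ σ w = 0)).card ≤ 2 ^ (k - 1) := by
    have hdeg1 : (P + 1).natDegree ≤ 2 ^ (k - 1) := by
      refine le_trans (Polynomial.natDegree_add_le _ _) ?_
      simp [hPdeg]
    refine le_trans (card_root_filter_le F (P + 1) hQne _ ?_) hdeg1
    intro w hw
    rw [Finset.mem_filter] at hw
    have hww : w ^ 2 ^ k = w := (Finset.mem_filter.1 hw.1).2
    rcases sigma_zero_or_one k F w hww with h | h
    · exact absurd h hw.2
    · rw [Polynomial.eval_add, Polynomial.eval_one, hPeval]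
      show (∑ i ∈ Finset.range k, w ^ 2 ^ i) + 1 = 0
      rw [h]
      exact CharTwo.add_self_eq_zero 1
  have hsplitW : (W.filter (fun w => σ w = 0)).card
      + (W.filter (fun w => ¬ σ w = 0)).card = 2 ^ k := by
    rw [Finset.card_filter_add_card_filter_not, hWcard]
  have hhalf : 2 ^ (k - 1) + 2 ^ (k - 1) = 2 ^ k := by
    rw [← two_mul, ← pow_succ']
    congr 1
    omega
  have hzero : (W.filter (fun w => σ w = 0)).card = 2 ^ (k - 1) := by omega
  -- transfer to range m
  have htrans : ((Finset.range m).filter (fun b => σ (U ^ b) = 0)).card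
      = (A.filter (fun w => σ w = 0)).card := by
    rw [hA, Finset.filter_image]
    rw [Finset.card_image_of_injOn (hinjU.mono (Finset.filter_subset _ _))]
  have hfin : A.filter (fun w => σ w = 0) = (W.filter (fun w => σ w = 0)).erase 0 := by
    rw [hAeq, Finset.filter_erase]
  have h0fil : (0 : F) ∈ W.filter (fun w => σ w = 0) := Finset.mem_filter.2 ⟨h0W, hσ0⟩
  have : ((Finset.range m).filter (fun b => σ (U ^ b) = 0)).card = 2 ^ (k - 1) - 1 := by
    rw [htrans, hfin, Finset.card_erase_of_mem h0fil, hzero]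
  exact this



private lemma trace_eq_zero_iff (k : ℕ) (hk : 0 < k) (F : Type) [Field F] [Fintype F]
    [DecidableEq F] [Algebra (ZMod 2) F] (hF : Fintype.card F = 2 ^ (2 * k)) (x : F) :
    Algebra.trace (ZMod 2) F x = 0 ↔ ∑ i ∈ Finset.range (2 * k), x ^ 2 ^ i = 0 := by
  haveI : Fact (Nat.Prime 2) := ⟨Nat.prime_two⟩
  haveI : CharP F 2 := charP_of_injective_algebraMap' (ZMod 2) 2
  have hinj : Function.Injective (algebraMap (ZMod 2) F) := (algebraMap (ZMod 2) F).injective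
  rw [← map_eq_zero_iff (algebraMap (ZMod 2) F) hinj]
  have hform : algebraMap (ZMod 2) F (Algebra.trace (ZMod 2) F x)
      = ∑ i ∈ Finset.range (2 * k), x ^ 2 ^ i := by
    rw [trace_eq_sum_automorphisms]
    -- frobenius as AlgEquiv
    have hfrobbij : Function.Bijective (frobenius F 2) :=
      (Finite.injective_iff_bijective).1 (frobenius F 2).injective
    set φ : F ≃ₐ[ZMod 2] F :=
      { RingEquiv.ofBijective (frobenius F 2) hfrobbij with
        commutes' := fun c => by
          show frobenius F 2 (algebraMap (ZMod 2) F c) = algebraMap (ZMod 2) F c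
          rw [frobenius_def, ← map_pow]
          congr 1
          have := ZMod.pow_card c
          simpa [ZMod.card] using this } with hφdef
    have hφ : ∀ (i : ℕ) (y : F), (φ ^ i) y = y ^ 2 ^ i := by
      intro i
      induction i with
      | zero => intro y; simp
      | succ i ih =>
        intro y
        rw [pow_succ, AlgEquiv.mul_apply, ih (φ y)]
        show (y ^ 2) ^ 2 ^ i = _
        rw [← pow_mul, ← pow_succ']
    have hcardG : Fintype.card (F ≃ₐ[ZMod 2] F) = 2 * k := by
      rw [← Nat.card_eq_fintype_card, IsGalois.card_aut_eq_finrank]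
      have hcard := Module.card_eq_pow_finrank (K := ZMod 2) (V := F)
      rw [ZMod.card, hF] at hcard
      exact (Nat.pow_right_injective le_rfl hcard.symm)
    have hordφ : orderOf φ = 2 * k := by
      have hdvd : orderOf φ ∣ 2 * k := by
        apply orderOf_dvd_of_pow_eq_one
        apply AlgEquiv.ext
        intro y
        rw [hφ, AlgEquiv.one_apply, ← hF, FiniteField.pow_card]
      rcases Nat.lt_or_ge (orderOf φ) (2 * k) with hlt | hge
      · exfalso
        set i := orderOf φ with hi
        have hipos : 0 < i := orderOf_pos φ
        have hroots : ∀ y : F, y ^ 2 ^ i = y := by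
          intro y
          have := pow_orderOf_eq_one φ
          calc y ^ 2 ^ i = (φ ^ i) y := (hφ i y).symm
          _ = y := by rw [this]; simp
        have hle : Fintype.card F ≤ 2 ^ i := by
          have hsub : (Finset.univ : Finset F) ⊆
              (X ^ 2 ^ i - X : F[X]).roots.toFinset := by
            intro y _
            rw [Multiset.mem_toFinset, mem_roots
              (FiniteField.X_pow_card_sub_X_ne_zero F (Nat.one_lt_two_pow hipos.ne'))]
            simp [hroots y, sub_eq_zero]
          calc Fintype.card F = (Finset.univ : Finset F).card := (Finset.card_univ).symm
          _ ≤ (X ^ 2 ^ i - X : F[X]).roots.toFinset.card := Finset.card_le_card hsub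
          _ ≤ Multiset.card (X ^ 2 ^ i - X : F[X]).roots := Multiset.toFinset_card_le _
          _ ≤ (X ^ 2 ^ i - X : F[X]).natDegree := Polynomial.card_roots' _
          _ = 2 ^ i := FiniteField.X_pow_card_sub_X_natDegree_eq F (Nat.one_lt_two_pow hipos.ne')
        rw [hF] at hle
        exact absurd (Nat.pow_le_pow_iff_right (by norm_num) |>.1 hle) (Nat.not_le.2 hlt)
      · exact Nat.le_antisymm (Nat.le_of_dvd (by positivity) hdvd) hge
    have hbij : Function.Bijective (fun i : Fin (2 * k) => φ ^ (i : ℕ)) := by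
      rw [Fintype.bijective_iff_injective_and_card]
      constructor
      · intro i j hij
        have := pow_injOn_Iio_orderOf (x := φ) (by rw [hordφ]; exact i.2) (by rw [hordφ]; exact j.2) hij
        exact Fin.ext this
      · simp [hcardG]
    rw [← Fintype.sum_bijective _ hbij (fun i : Fin (2 * k) => x ^ 2 ^ (i : ℕ))
      (fun σ => σ x) (fun i => (hφ i x).symm)]
    exact Fin.sum_univ_eq_sum_range (fun i => x ^ 2 ^ i) (2*k)
  rw [hform]

private lemma sum_pm {β : Type} (s : Finset β) (p : β → Prop) [DecidablePred p] :
    ∑ b ∈ s, (if p b then (1 : ℤ) else -1) = (s.filter p).card * 2 - s.card := by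
  rw [Finset.sum_ite, Finset.sum_const, Finset.sum_const]
  have h := Finset.card_filter_add_card_filter_not (s := s) (p := p)
  push_cast [← h]
  ring

theorem exp_sum_cubic_decimation (k : ℕ) (hk : Odd k) (h3 : 3 ∣ 2 ^ k + 1)
    (F : Type) [Field F] [Fintype F] [DecidableEq F] [Algebra (ZMod 2) F]
    (hF : Fintype.card F = 2 ^ (2 * k)) :
    (3 : ℤ) * ((∑ x ∈ Finset.univ.erase (0 : F),
        (if Algebra.trace (ZMod 2) F (x ^ ((2 ^ k + 1) / 3)) = 0 then (1 : ℤ) else -1)) + 1)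
      = 2 ^ k * (2 ^ k - 2) := by
  haveI : Fact (Nat.Prime 2) := ⟨Nat.prime_two⟩
  haveI : CharP F 2 := charP_of_injective_algebraMap' (ZMod 2) 2
  obtain ⟨c, hc⟩ := h3
  have hk1 : 0 < k := hk.pos
  have h2k2 : 2 ≤ 2 ^ k := by
    calc 2 = 2 ^ 1 := (pow_one 2).symm
    _ ≤ 2 ^ k := Nat.pow_le_pow_right (by norm_num) hk1
  have hcpos : 0 < c := by omega
  set m : ℕ := 2 ^ k - 1 with hm
  set e : ℕ := 3 * m with he
  have hmpos : 0 < m := by omega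
  have hepos : 0 < e := by omega
  have hm1 : m + 1 = 2 ^ k := by omega
  have h2k3 : 2 ^ k % 3 = 2 := by omega
  have hm3 : m % 3 = 1 := by omega
  have hD : (2 ^ k + 1) / 3 = c := by omega
  have hNcard : Fintype.card Fˣ = c * e := by
    rw [Fintype.card_units, hF, he, hm]
    have h22 : 2 ^ (2 * k) = 2 ^ k * 2 ^ k := by rw [two_mul, pow_add]
    rw [h22]
    zify [show 1 ≤ 2 ^ k * 2 ^ k from by nlinarith, show 1 ≤ 2 ^ k from by omega]
    have hci : (2 : ℤ) ^ k + 1 = 3 * c := by exact_mod_cast hc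
    linear_combination ((2 : ℤ) ^ k - 1) * hci
  obtain ⟨g, hg⟩ := IsCyclic.exists_generator (α := Fˣ)
  have hgord : orderOf g = c * e := by
    rw [orderOf_eq_card_of_forall_mem_zpowers hg, Nat.card_eq_fintype_card, hNcard]
  have hgFord : orderOf ((g : Fˣ) : F) = c * e := by rw [orderOf_units, hgord]
  -- the summand function
  set f : F → ℤ := fun z => if ∑ i ∈ Finset.range (2 * k), z ^ 2 ^ i = 0 then 1 else -1 with hf
  have hsummand : ∀ x : F,
      (if Algebra.trace (ZMod 2) F (x ^ ((2 ^ k + 1) / 3)) = 0 then (1 : ℤ) else -1)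
        = f (x ^ c) := by
    intro x
    rw [hD, hf]
    simp only [trace_eq_zero_iff k hk1 F hF (x ^ c)]
  rw [Finset.sum_congr rfl (fun x _ => hsummand x)]
  -- stage 1 : sum over erase 0 = sum over powers of g
  have hinj1 : Set.InjOn (fun i => ((g : Fˣ) : F) ^ i) (Finset.range (c * e)) := by
    intro a ha b hb hab
    exact pow_injOn_Iio_orderOf (by simpa [hgFord] using Finset.mem_range.1 ha)
      (by simpa [hgFord] using Finset.mem_range.1 hb) hab
  have himg : (Finset.range (c * e)).image (fun i => ((g : Fˣ) : F) ^ i)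
      = Finset.univ.erase (0 : F) := by
    apply Finset.eq_of_subset_of_card_le
    · intro z hz
      rw [Finset.mem_image] at hz
      obtain ⟨i, _, rfl⟩ := hz
      refine Finset.mem_erase.2 ⟨?_, Finset.mem_univ _⟩
      rw [← Units.val_pow_eq_pow_val]
      exact Units.ne_zero _
    · rw [Finset.card_erase_of_mem (Finset.mem_univ _), Finset.card_univ, hF,
        Finset.card_image_of_injOn hinj1, Finset.card_range]
      have h22 : 2 ^ (2 * k) = 2 ^ k * 2 ^ k := by rw [two_mul, pow_add]
      rw [← hNcard, Fintype.card_units, hF]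
  rw [← himg, Finset.sum_image (fun a ha b hb => hinj1 ha hb)]
  -- rewrite (g^i)^c = H1^i
  set H1 : F := ((g : Fˣ) : F) ^ c with hH1
  have hstep1 : ∀ i ∈ Finset.range (c * e), f ((((g : Fˣ) : F) ^ i) ^ c) = f (H1 ^ i) := by
    intro i _
    rw [pow_right_comm]
  rw [Finset.sum_congr rfl hstep1]
  -- order of H1
  have hhord : orderOf (g ^ c : Fˣ) = e := by
    rw [orderOf_pow, hgord, Nat.gcd_eq_right (dvd_mul_right c e), Nat.mul_div_cancel_left e hcpos]
  have hH1u : H1 = ((g ^ c : Fˣ) : F) := by rw [hH1, Units.val_pow_eq_pow_val]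
  have hH1ord : orderOf H1 = e := by rw [hH1u, orderOf_units, hhord]
  have hH1e : H1 ^ e = 1 := by rw [← hH1ord]; exact pow_orderOf_eq_one H1
  -- stage 1b : collapse factor c
  have hstage1 : ∑ i ∈ Finset.range (c * e), f (H1 ^ i)
      = (c : ℤ) * ∑ b : Fin e, f (H1 ^ (b : ℕ)) := by
    rw [← Fin.sum_univ_eq_sum_range (fun i => f (H1 ^ i)) (c * e)]
    rw [← Equiv.sum_comp finProdFinEquiv (fun j : Fin (c * e) => f (H1 ^ (j : ℕ)))]
    have hterm : ∀ p : Fin c × Fin e,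
        f (H1 ^ ((finProdFinEquiv p : Fin (c * e)) : ℕ)) = f (H1 ^ ((p.2 : ℕ))) := by
      intro p
      congr 1
      rw [finProdFinEquiv_apply_val, pow_add, pow_mul, hH1e, one_pow, mul_one]
    rw [Finset.sum_congr rfl (fun p _ => hterm p)]
    have hps1 : (∑ p : Fin c × Fin e, f (H1 ^ ((p.2 : ℕ))))
        = ∑ _a : Fin c, ∑ b : Fin e, f (H1 ^ ((b : ℕ))) := by
      exact Fintype.sum_prod_type (f := fun p : Fin c × Fin e => f (H1 ^ ((p.2 : ℕ))))
    rw [hps1, Finset.sum_const, Finset.card_univ, Fintype.card_fin, nsmul_eq_mul]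
  rw [hstage1]
  -- stage 2 : CRT decomposition of Fin e sum
  set Ω1 : F := H1 ^ m with hΩ1
  set U1 : F := H1 ^ 3 with hU1
  have hΩord : orderOf Ω1 = 3 := by
    rw [hΩ1, hH1u, ← Units.val_pow_eq_pow_val, orderOf_units, orderOf_pow, hhord, he,
      Nat.gcd_eq_right (dvd_mul_left m 3), mul_comm 3 m, Nat.mul_div_cancel_left 3 hmpos]
  have hUord : orderOf U1 = m := by
    rw [hU1, hH1u, ← Units.val_pow_eq_pow_val, orderOf_units, orderOf_pow, hhord, he,
      Nat.gcd_eq_right (dvd_mul_right 3 m), Nat.mul_div_cancel_left m (by norm_num)]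
  have hU1ne : U1 ≠ 0 := by
    rw [hU1, hH1u, ← Units.val_pow_eq_pow_val]
    exact Units.ne_zero _
  have hΩ3 : Ω1 ^ 3 = 1 := by rw [← hΩord]; exact pow_orderOf_eq_one Ω1
  have hΩne1 : Ω1 ≠ 1 := by
    intro h
    rw [h, orderOf_one] at hΩord
    omega
  have hUm : U1 ^ m = 1 := by rw [← hUord]; exact pow_orderOf_eq_one U1
  have hsub : ∀ b : ℕ, (U1 ^ b) ^ 2 ^ k = U1 ^ b := by
    intro b
    rw [pow_right_comm, ← hm1, pow_succ, hUm, one_mul]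
  set ψ : Fin 3 × Fin m → Fin e :=
    fun p => ⟨((p.1 : ℕ) * m + 3 * (p.2 : ℕ)) % e, Nat.mod_lt _ hepos⟩ with hψ
  have hψbij : Function.Bijective ψ := by
    rw [Fintype.bijective_iff_injective_and_card]
    constructor
    · rintro ⟨a, b⟩ ⟨a', b'⟩ hval
      have hmodeq : ((a : ℕ) * m + 3 * (b : ℕ)) ≡ ((a' : ℕ) * m + 3 * (b' : ℕ)) [MOD e] :=
        congrArg Fin.val hval
      have hm31 : m ≡ 1 [MOD 3] := by
        show m % 3 = 1 % 3
        omega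
      have hM : ∀ (a b : ℕ), (a * m + 3 * b) ≡ a [MOD 3] := by
        intro a b
        calc a * m + 3 * b ≡ a * m + 0 [MOD 3] :=
              (Nat.ModEq.refl (a * m)).add ((Nat.modEq_zero_iff_dvd).2 ⟨b, rfl⟩)
          _ = a * m := by ring
          _ ≡ a * 1 [MOD 3] := (Nat.ModEq.refl a).mul hm31
          _ = a := mul_one a
      have hmod3 : ((a : ℕ) * m + 3 * (b : ℕ)) ≡ ((a' : ℕ) * m + 3 * (b' : ℕ)) [MOD 3] :=
        hmodeq.of_dvd ⟨m, he⟩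
      have ha3 : (a : ℕ) ≡ (a' : ℕ) [MOD 3] :=
        ((hM a b).symm.trans hmod3).trans (hM a' b')
      have haa : (a : ℕ) = a' := by
        have h1 : (a : ℕ) < 3 := a.2
        have h2 : (a' : ℕ) < 3 := a'.2
        have h3 : (a : ℕ) % 3 = (a' : ℕ) % 3 := ha3
        omega
      have hbb : (b : ℕ) = b' := by
        rw [haa] at hmodeq
        have h1 : 3 * (b : ℕ) ≡ 3 * (b' : ℕ) [MOD 3 * m] := by
          rw [he] at hmodeq
          exact Nat.ModEq.add_left_cancel' _ hmodeq
        have h2 : (b : ℕ) ≡ (b' : ℕ) [MOD m] :=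
          Nat.ModEq.mul_left_cancel' (by norm_num) h1
        have hb1 : (b : ℕ) < m := b.2
        have hb2 : (b' : ℕ) < m := b'.2
        have h3 : (b : ℕ) % m = (b' : ℕ) % m := h2
        rw [Nat.mod_eq_of_lt hb1, Nat.mod_eq_of_lt hb2] at h3
        exact h3
      exact Prod.ext (Fin.ext haa) (Fin.ext hbb)
    · simp [he]
  have hψval : ∀ p : Fin 3 × Fin m,
      H1 ^ ((ψ p : Fin e) : ℕ) = Ω1 ^ ((p.1 : ℕ)) * U1 ^ ((p.2 : ℕ)) := by
    rintro ⟨a, b⟩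
    show H1 ^ (((a : ℕ) * m + 3 * (b : ℕ)) % e) = _
    have h1 : H1 ^ (((a : ℕ) * m + 3 * (b : ℕ)) % e)
        = H1 ^ ((a : ℕ) * m + 3 * (b : ℕ)) := by
      conv_lhs => rw [← hH1ord]
      exact pow_mod_orderOf _ _
    rw [h1, pow_add, mul_comm (a : ℕ) m, pow_mul, pow_mul, hΩ1, hU1]
  have hstage2 : ∑ b : Fin e, f (H1 ^ (b : ℕ))
      = ∑ p : Fin 3 × Fin m, f (Ω1 ^ ((p.1 : ℕ)) * U1 ^ ((p.2 : ℕ))) :=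
    (Fintype.sum_bijective ψ hψbij
      (fun p : Fin 3 × Fin m => f (Ω1 ^ ((p.1 : ℕ)) * U1 ^ ((p.2 : ℕ))))
      (fun b : Fin e => f (H1 ^ (b : ℕ))) (fun p => by
        show f (Ω1 ^ ((p.1 : ℕ)) * U1 ^ ((p.2 : ℕ))) = f (H1 ^ ((ψ p : Fin e) : ℕ))
        rw [hψval p])).symm
  have hps2 : (∑ p : Fin 3 × Fin m, f (Ω1 ^ ((p.1 : ℕ)) * U1 ^ ((p.2 : ℕ))))
      = ∑ a : Fin 3, ∑ b : Fin m, f (Ω1 ^ ((a : ℕ)) * U1 ^ ((b : ℕ))) := by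
    exact Fintype.sum_prod_type
      (f := fun p : Fin 3 × Fin m => f (Ω1 ^ ((p.1 : ℕ)) * U1 ^ ((p.2 : ℕ))))
  rw [hstage2, hps2, Fin.sum_univ_three]
  -- evaluate the three inner sums
  have hsum0 : ∑ b : Fin m, f (Ω1 ^ (((0 : Fin 3) : ℕ)) * U1 ^ ((b : ℕ))) = (m : ℤ) := by
    have : ∀ b : Fin m, f (Ω1 ^ (((0 : Fin 3) : ℕ)) * U1 ^ ((b : ℕ))) = 1 := by
      intro b
      have h0 : ((0 : Fin 3) : ℕ) = 0 := rfl
      rw [h0, pow_zero, one_mul, hf]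
      simp only [if_pos (tau_subfield k F (U1 ^ (b : ℕ)) (hsub b))]
    rw [Finset.sum_congr rfl (fun b _ => this b), Finset.sum_const, Finset.card_univ,
      Fintype.card_fin, nsmul_eq_mul, mul_one]
  have hcount := count_sigma k hk F U1 (by rw [hUord, hm]) hU1ne
  have hsumgen : ∀ ω : F, ω ^ 3 = 1 → ω ≠ 1 →
      ∑ b : Fin m, f (ω * U1 ^ ((b : ℕ))) = -1 := by
    intro ω hω3 hωne
    have hterm : ∀ b : ℕ, f (ω * U1 ^ b)
        = if ∑ i ∈ Finset.range k, (U1 ^ b) ^ 2 ^ i = 0 then 1 else -1 := by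
      intro b
      rw [hf]
      simp only [tau_omega k F h2k3 ω (U1 ^ b) hω3 hωne (hsub b)]
    calc ∑ b : Fin m, f (ω * U1 ^ ((b : ℕ)))
        = ∑ b : Fin m, (if ∑ i ∈ Finset.range k, (U1 ^ ((b : ℕ))) ^ 2 ^ i = 0
            then (1 : ℤ) else -1) := Finset.sum_congr rfl (fun b _ => hterm (b : ℕ))
      _ = ∑ b ∈ Finset.range m, (if ∑ i ∈ Finset.range k, (U1 ^ b) ^ 2 ^ i = 0
            then (1 : ℤ) else -1) :=
        Fin.sum_univ_eq_sum_range
          (fun b => if ∑ i ∈ Finset.range k, (U1 ^ b) ^ 2 ^ i = 0 then (1 : ℤ) else -1) m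
      _ = -1 := ?_
    rw [sum_pm, hm, hcount, Finset.card_range]
    have hpk : (1 : ℕ) ≤ 2 ^ (k - 1) := Nat.one_le_two_pow
    have hcast1 : ((2 ^ (k - 1) - 1 : ℕ) : ℤ) = (2 : ℤ) ^ (k - 1) - 1 := by
      push_cast [hpk]
      ring
    have hcast2 : ((m : ℕ) : ℤ) = (2 : ℤ) ^ k - 1 := by
      rw [hm]
      push_cast [show (1 : ℕ) ≤ 2 ^ k from by omega]
      ring
    rw [hcast1, hcast2]
    have hpow : (2 : ℤ) ^ k = 2 ^ (k - 1) * 2 := by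
      rw [← pow_succ]
      congr 1
      omega
    linarith [hpow]
  have hsum1 : ∑ b : Fin m, f (Ω1 ^ (((1 : Fin 3) : ℕ)) * U1 ^ ((b : ℕ))) = -1 := by
    have h1 : ((1 : Fin 3) : ℕ) = 1 := rfl
    rw [h1]
    simp only [pow_one]
    exact hsumgen Ω1 hΩ3 hΩne1
  have hsum2 : ∑ b : Fin m, f (Ω1 ^ (((2 : Fin 3) : ℕ)) * U1 ^ ((b : ℕ))) = -1 := by
    have h2 : ((2 : Fin 3) : ℕ) = 2 := rfl
    rw [h2]
    have hω3 : (Ω1 ^ 2) ^ 3 = 1 := by rw [← pow_mul, mul_comm, pow_mul, hΩ3, one_pow]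
    have hωne : Ω1 ^ 2 ≠ 1 := by
      intro h
      have hd1 : orderOf Ω1 ∣ 2 := orderOf_dvd_of_pow_eq_one h
      rw [hΩord] at hd1
      omega
    exact hsumgen (Ω1 ^ 2) hω3 hωne
  rw [hsum0, hsum1, hsum2]
  -- final arithmetic
  have hci : (2 : ℤ) ^ k + 1 = 3 * c := by exact_mod_cast hc
  have hcast2 : ((m : ℕ) : ℤ) = (2 : ℤ) ^ k - 1 := by
    rw [hm]
    push_cast [show (1 : ℕ) ≤ 2 ^ k from by omega]
    ring
  rw [hcast2]
  linear_combination (3 - (2 : ℤ) ^ k) * hci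
end

section
/- Let k, l be odd coprime with 0 < l < k, e = k - l (so gcd(e, 2k) = 2), q = 2^{2k}, and a, b ∈ GF(q) with a ≠ 0. Then the kernel V of the GF(4)-linearized polynomial of degree 2^{2e} associated to the quadratic form Q_{a,b}(x) = Tr_m(a x^{2^l+1} + b x^{2^k+1}) is a GF(4)-vector subspace of GF(q) of dimension at most 2. -/
lemma aux_pow_mul {F : Type*} [Monoid F] (z : F) (m : ℕ) (h : z ^ (2:ℕ)^m = z) :
    ∀ q : ℕ, z ^ (2:ℕ)^(m*q) = z := by
  intro q
  induction q with
  | zero => simpa using rfl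
  | succ q ih =>
    have : (2:ℕ)^(m*(q+1)) = 2^(m*q) * 2^m := by rw [← pow_add]; ring_nf
    rw [this, pow_mul, ih, h]

lemma aux_pow_gcd {F : Type*} [Monoid F] (z : F) :
    ∀ a b : ℕ, z ^ (2:ℕ)^a = z → z ^ (2:ℕ)^b = z → z ^ (2:ℕ)^(Nat.gcd a b) = z := by
  intro a b
  induction a, b using Nat.gcd.induction with
  | H0 n => intro _ h; simpa [Nat.gcd] using h
  | H1 m n hm ih =>
    intro h1 h2
    rw [Nat.gcd_rec]
    apply ih _ h1
    have hdiv : n = m * (n / m) + n % m := (Nat.div_add_mod n m).symm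
    have h3 : z ^ (2:ℕ)^(m * (n/m)) = z := aux_pow_mul z m h1 _
    calc z ^ (2:ℕ)^(n % m) = (z ^ (2:ℕ)^(m*(n/m))) ^ (2:ℕ)^(n % m) := by rw [h3]
      _ = z ^ ((2:ℕ)^(m*(n/m)) * 2^(n % m)) := (pow_mul z _ _).symm
      _ = z ^ (2:ℕ)^n := by rw [← pow_add, ← hdiv]
      _ = z := h2

lemma aux_four_j : ∀ j : ℕ, ∃ t, 4^j = 3*t + 1 := by
  intro j
  induction j with
  | zero => exact ⟨0, rfl⟩
  | succ j ih =>
    obtain ⟨t, ht⟩ := ih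
    exact ⟨4*t+1, by rw [pow_succ, ht]; ring⟩

lemma aux_delta {F : Type*} [Monoid F] (δ : F) (hδ : δ^3 = 1) (n : ℕ) (hn : Odd n) :
    δ^(2:ℕ)^n = δ^2 := by
  obtain ⟨j, hj⟩ := hn
  obtain ⟨t, ht⟩ := aux_four_j j
  have h2 : (2:ℕ)^n = 3*(2*t) + 2 := by
    subst hj
    rw [pow_add, pow_mul]
    norm_num [ht]
    ring
  rw [h2, pow_add, pow_mul, hδ, one_pow, one_mul]

lemma aux_zmod2 : ∀ p q r s t u : ZMod 2,
    p+q+r = 0 → r+s+t = 0 → u+q+s = 0 → p+u+t = 0 := by decide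

lemma aux_card_four {F : Type} [Field F] [Fintype F] [DecidableEq F]
    (s : Finset F) (hs : ∀ z ∈ s, z^4 = z) : s.card ≤ 4 := by
  classical
  set p : Polynomial F := Polynomial.X^4 - Polynomial.X with hp
  have hpne : p ≠ 0 := by
    intro h
    have h4 : p.coeff 4 = 1 := by
      simp [hp, Polynomial.coeff_X_pow, Polynomial.coeff_X]
    rw [h] at h4
    simp at h4
  have hdeg : p.natDegree ≤ 4 := by
    refine le_trans (Polynomial.natDegree_sub_le _ _) ?_
    simp [Polynomial.natDegree_X_pow, Polynomial.natDegree_X]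
  have hsub : s ⊆ p.roots.toFinset := by
    intro z hz
    rw [Multiset.mem_toFinset, Polynomial.mem_roots hpne]
    simp only [Polynomial.IsRoot, hp, Polynomial.eval_sub, Polynomial.eval_pow,
      Polynomial.eval_X, sub_eq_zero]
    exact hs z hz
  calc s.card ≤ p.roots.toFinset.card := Finset.card_le_card hsub
    _ ≤ Multiset.card p.roots := Multiset.toFinset_card_le _
    _ ≤ p.natDegree := Polynomial.card_roots' p
    _ ≤ 4 := hdeg

theorem radical_GF4_dim_le_two (k l : ℕ) (hk : Odd k) (hl : Odd l) (hl0 : 0 < l)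
    (hlk : l < k) (hco : Nat.Coprime k l)
    (F : Type) [Field F] [Fintype F] [DecidableEq F] [Algebra (ZMod 2) F]
    (hF : Fintype.card F = 2 ^ (2 * k)) (a b : F) (ha : a ≠ 0)
    (Q : F → ZMod 2)
    (hQ : Q = fun x => Algebra.trace (ZMod 2) F (a * x ^ (2 ^ l + 1) + b * x ^ (2 ^ k + 1)))
    (V : Finset F)
    (hV : V = Finset.univ.filter (fun x : F => ∀ y : F, Q (x + y) + Q x + Q y = 0)) :
    (∀ x ∈ V, ∀ y ∈ V, x + y ∈ V) ∧
    (∀ δ : F, δ ^ 3 = 1 → ∀ x ∈ V, δ * x ∈ V) ∧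
    V.card ≤ 16 := by
  haveI : Fact (Nat.Prime 2) := ⟨Nat.prime_two⟩
  have hinj : Function.Injective (algebraMap (ZMod 2) F) := (algebraMap (ZMod 2) F).injective
  haveI hchar : CharP F 2 := charP_of_injective_algebraMap hinj 2
  have htwoF : (2 : F) = 0 := by exact_mod_cast CharP.cast_eq_zero F 2
  set Tr := Algebra.trace (ZMod 2) F with hTrdef
  have hmem : ∀ x : F, x ∈ V ↔ ∀ y : F, Q (x + y) + Q x + Q y = 0 := by
    intro x; rw [hV]; simp
  have hfr : ∀ (n : ℕ) (x y : F), (x + y)^(2:ℕ)^n = x^(2:ℕ)^n + y^(2:ℕ)^n :=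
    fun n x y => add_pow_char_pow x y 2 n
  have hcard : ∀ z : F, z ^ (2:ℕ)^(2*k) = z := by
    intro z; rw [← hF]; exact FiniteField.pow_card z
  -- Part 1
  have part1 : ∀ x ∈ V, ∀ y ∈ V, x + y ∈ V := by
    intro x hx x' hx'
    rw [hmem] at hx hx' ⊢
    intro y
    have := aux_zmod2 (Q (x + (x'+y))) (Q x) (Q (x'+y)) (Q x') (Q y) (Q (x+x'))
      (hx (x' + y)) (hx' y) (hx x')
    rwa [← add_assoc] at this
  -- trace invariance under frobenius
  have hfrob_alg : ∀ r : ZMod 2, (algebraMap (ZMod 2) F r)^2 = algebraMap (ZMod 2) F r := by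
    have h : ∀ r : ZMod 2, r * r = r := by intro r; fin_cases r <;> rfl
    intro r; rw [sq, ← map_mul, h]
  let σ : F →ₗ[ZMod 2] F :=
    { toFun := fun x => x^2
      map_add' := fun x y => add_pow_char x y 2
      map_smul' := by
        intro r x
        simp only [RingHom.id_apply, Algebra.smul_def, mul_pow, hfrob_alg] }
  have hσinj : Function.Injective σ := fun x y h => frobenius_inj F 2 h
  let σe : F ≃ₗ[ZMod 2] F :=
    LinearEquiv.ofBijective σ ⟨hσinj, (Finite.injective_iff_bijective.mp hσinj).2⟩
  have htr2 : ∀ w : F, Tr (w^2) = Tr w := by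
    intro w
    rw [hTrdef, Algebra.trace_apply, Algebra.trace_apply]
    have hc : Algebra.lmul (ZMod 2) F (w^2) = σe.conj (Algebra.lmul (ZMod 2) F w) := by
      ext x
      have hx : (σe.symm x : F)^2 = x := σe.apply_symm_apply x
      rw [LinearEquiv.conj_apply_apply]
      show w^2 * x = (w * σe.symm x)^2
      rw [mul_pow, hx]
    rw [hc, LinearMap.trace_conj']
  have htrpow : ∀ (s : ℕ) (w : F), Tr (w^(2:ℕ)^s) = Tr w := by
    intro s
    induction s with
    | zero => intro w; norm_num
    | succ s ih =>
      intro w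
      have h : w^(2:ℕ)^(s+1) = (w^(2:ℕ)^s)^2 := by rw [← pow_mul, pow_succ]
      rw [h, htr2, ih]
  -- bilinear form expansion
  have hB : ∀ u y : F, Q (u + y) + Q u + Q y
      = Tr (a*((u^(2:ℕ)^l)*y + u*(y^(2:ℕ)^l)) + b*((u^(2:ℕ)^k)*y + u*(y^(2:ℕ)^k))) := by
    intro u y
    simp only [hQ]
    rw [← map_add, ← map_add]
    congr 1
    have hl2 := hfr l u y
    have hk2 := hfr k u y
    rw [pow_succ, pow_succ, pow_succ, pow_succ, pow_succ, pow_succ]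
    generalize (2:ℕ)^l = L at hl2 ⊢
    generalize (2:ℕ)^k = K2 at hk2 ⊢
    linear_combination (a*(u+y))*hl2 + (b*(u+y))*hk2
      + (a*u^L*u + a*y^L*y + b*u^K2*u + b*y^K2*y)*htwoF
  -- the kernel relation
  have hM : ∀ x ∈ V, a * x^(2:ℕ)^l + (a*x)^(2:ℕ)^(2*k-l) + (b + b^(2:ℕ)^k) * x^(2:ℕ)^k = 0 := by
    intro x hx
    have hbil : ∀ y : F, Tr (a*((x^(2:ℕ)^l)*y + x*(y^(2:ℕ)^l))
        + b*((x^(2:ℕ)^k)*y + x*(y^(2:ℕ)^k))) = 0 := by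
      intro y
      rw [← hB]
      exact (hmem x).1 hx y
    have key : ∀ y : F, Tr ((a * x^(2:ℕ)^l + (a*x)^(2:ℕ)^(2*k-l)
        + (b + b^(2:ℕ)^k) * x^(2:ℕ)^k) * y) = 0 := by
      intro y
      have hbily := hbil y
      have hsplit2 : a*((x^(2:ℕ)^l)*y + x*(y^(2:ℕ)^l)) + b*((x^(2:ℕ)^k)*y + x*(y^(2:ℕ)^k))
          = a*(x^(2:ℕ)^l*y) + ((a*(x*y^(2:ℕ)^l)) + (b*(x^(2:ℕ)^k*y) + b*(x*y^(2:ℕ)^k))) := by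
        ring
      rw [hsplit2, map_add, map_add, map_add] at hbily
      have hsplit : (a * x^(2:ℕ)^l + (a*x)^(2:ℕ)^(2*k-l)
          + (b + b^(2:ℕ)^k) * x^(2:ℕ)^k) * y
          = a*(x^(2:ℕ)^l*y) + (((a*x)^(2:ℕ)^(2*k-l)*y)
            + (b*(x^(2:ℕ)^k*y) + b^(2:ℕ)^k*x^(2:ℕ)^k*y)) := by
        ring
      rw [hsplit, map_add, map_add, map_add]
      have e2 : Tr ((a*x)^(2:ℕ)^(2*k-l)*y) = Tr (a*(x*y^(2:ℕ)^l)) := by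
        have harg : (a*(x*y^(2:ℕ)^l))^(2:ℕ)^(2*k-l) = (a*x)^(2:ℕ)^(2*k-l)*y := by
          have hexp : (2:ℕ)^l * 2^(2*k-l) = 2^(2*k) := by
            rw [← pow_add]; congr 1; omega
          rw [mul_pow, mul_pow, ← pow_mul, hexp, hcard y]
          ring
        rw [← htrpow (2*k-l) (a*(x*y^(2:ℕ)^l)), harg]
      have e3 : Tr (b^(2:ℕ)^k*x^(2:ℕ)^k*y) = Tr (b*(x*y^(2:ℕ)^k)) := by
        have harg : (b*(x*y^(2:ℕ)^k))^(2:ℕ)^k = b^(2:ℕ)^k*x^(2:ℕ)^k*y := by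
          have hexp : (2:ℕ)^k * 2^k = 2^(2*k) := by
            rw [← pow_add]; congr 1; omega
          rw [mul_pow, mul_pow, ← pow_mul, hexp, hcard y]
          ring
        rw [← htrpow k (b*(x*y^(2:ℕ)^k)), harg]
      rw [e2, e3]
      exact hbily
    have hnd := traceForm_nondegenerate (ZMod 2) F
    exact hnd.1 _ (fun y => by rw [Algebra.traceForm_apply]; exact key y)
  -- raise to the power 2^l
  have hE : ∀ x ∈ V, a^(2:ℕ)^l * x^(2:ℕ)^(2*l) + a * x
      + (b + b^(2:ℕ)^k)^(2:ℕ)^l * x^(2:ℕ)^(k+l) = 0 := by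
    intro x hx
    have h1 : (a * x^(2:ℕ)^l + (a*x)^(2:ℕ)^(2*k-l)
        + (b + b^(2:ℕ)^k) * x^(2:ℕ)^k)^(2:ℕ)^l = 0 := by
      rw [hM x hx]
      exact zero_pow (by positivity)
    rw [hfr, hfr] at h1
    have q1 : (a * x^(2:ℕ)^l)^(2:ℕ)^l = a^(2:ℕ)^l * x^(2:ℕ)^(2*l) := by
      have h : (2:ℕ)^l * 2^l = 2^(2*l) := by rw [← pow_add]; congr 1; omega
      rw [mul_pow, ← pow_mul, h]
    have q2 : ((a*x)^(2:ℕ)^(2*k-l))^(2:ℕ)^l = a * x := by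
      have h : (2:ℕ)^(2*k-l) * 2^l = 2^(2*k) := by rw [← pow_add]; congr 1; omega
      rw [← pow_mul, h, hcard (a*x)]
    have q3 : ((b + b^(2:ℕ)^k) * x^(2:ℕ)^k)^(2:ℕ)^l
        = (b + b^(2:ℕ)^k)^(2:ℕ)^l * x^(2:ℕ)^(k+l) := by
      have h : (2:ℕ)^k * 2^l = 2^(k+l) := by rw [← pow_add]
      rw [mul_pow, ← pow_mul, h]
    rw [q1, q2, q3] at h1
    linear_combination h1
  -- raise to the power 2^(2e)
  set e : ℕ := k - l with hedef
  have hker : ∀ x ∈ V, a^(2:ℕ)^(l+2*e) * x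
      + (b + b^(2:ℕ)^k)^((2:ℕ)^l * 2^(2*e)) * x^(2:ℕ)^e
      + a^(2:ℕ)^(2*e) * (x^(2:ℕ)^e)^(2:ℕ)^e = 0 := by
    intro x hx
    have h1 : (a^(2:ℕ)^l * x^(2:ℕ)^(2*l) + a * x
        + (b + b^(2:ℕ)^k)^(2:ℕ)^l * x^(2:ℕ)^(k+l))^(2:ℕ)^(2*e) = 0 := by
      rw [hE x hx]
      exact zero_pow (by positivity)
    rw [hfr, hfr] at h1
    have q1 : (a^(2:ℕ)^l * x^(2:ℕ)^(2*l))^(2:ℕ)^(2*e) = a^(2:ℕ)^(l+2*e) * x := by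
      have ea : (2:ℕ)^l * 2^(2*e) = 2^(l+2*e) := by rw [← pow_add]
      have eb : (2:ℕ)^(2*l) * 2^(2*e) = 2^(2*k) := by rw [← pow_add]; congr 1; omega
      rw [mul_pow, ← pow_mul, ← pow_mul, ea, eb, hcard x]
    have q2 : (a * x)^(2:ℕ)^(2*e) = a^(2:ℕ)^(2*e) * (x^(2:ℕ)^e)^(2:ℕ)^e := by
      have h : (x^(2:ℕ)^e)^(2:ℕ)^e = x^(2:ℕ)^(2*e) := by
        rw [← pow_mul, ← pow_add]
        congr 2
        omega
      rw [mul_pow, h]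
    have q3 : ((b + b^(2:ℕ)^k)^(2:ℕ)^l * x^(2:ℕ)^(k+l))^(2:ℕ)^(2*e)
        = (b + b^(2:ℕ)^k)^((2:ℕ)^l * 2^(2*e)) * x^(2:ℕ)^e := by
      have eb : (2:ℕ)^(k+l) * 2^(2*e) = 2^(2*k) * 2^e := by
        rw [← pow_add, ← pow_add]; congr 1; omega
      rw [mul_pow, ← pow_mul, ← pow_mul, eb, pow_mul x, hcard x]
    rw [q1, q2, q3] at h1
    linear_combination h1
  -- fixed points of x ↦ x^(2^e) satisfy z^4 = z
  have he2 : 2 ∣ e := (Nat.Odd.sub_odd hk hl).two_dvd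
  have hgcd : Nat.gcd e (2*k) = 2 := by
    have hek : Nat.gcd e k = 1 := by
      have hsub : k - e = l := by omega
      have hd1 : Nat.gcd e k ∣ l := by
        have h := Nat.dvd_sub (Nat.gcd_dvd_right e k) (Nat.gcd_dvd_left e k)
        rwa [hsub] at h
      have h2 : Nat.gcd e k ∣ Nat.gcd k l := Nat.dvd_gcd (Nat.gcd_dvd_right e k) hd1
      rw [hco] at h2
      exact Nat.dvd_one.mp h2
    have hdvd2 : Nat.gcd e (2*k) ∣ 2 := by
      have h1 : Nat.gcd e (2*k) ∣ Nat.gcd (2*e) (2*k) :=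
        Nat.dvd_gcd ((Nat.gcd_dvd_left e (2*k)).mul_left 2) (Nat.gcd_dvd_right _ _)
      rwa [Nat.gcd_mul_left, hek, mul_one] at h1
    have h2dvd : 2 ∣ Nat.gcd e (2*k) := Nat.dvd_gcd he2 ⟨k, rfl⟩
    exact Nat.dvd_antisymm hdvd2 h2dvd
  have hfix : ∀ z : F, z^(2:ℕ)^e = z → z^4 = z := by
    intro z hz
    have h := aux_pow_gcd z e (2*k) hz (hcard z)
    rw [hgcd] at h
    norm_num at h
    exact h
  -- Part 2
  have part2 : ∀ δ : F, δ ^ 3 = 1 → ∀ x ∈ V, δ * x ∈ V := by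
    intro δ hδ x hx
    rw [hmem] at hx ⊢
    intro y
    have hδl : δ^(2:ℕ)^l = δ^2 := aux_delta δ hδ l hl
    have hδk : δ^(2:ℕ)^k = δ^2 := aux_delta δ hδ k hk
    have hδ4 : δ^4 = δ := by
      have h : δ^4 = δ^3 * δ := by ring
      rw [h, hδ, one_mul]
    have hδl2 : (δ^2)^(2:ℕ)^l = δ := by
      rw [pow_right_comm, hδl, ← pow_mul]
      norm_num [hδ4]
    have hδk2 : (δ^2)^(2:ℕ)^k = δ := by
      rw [pow_right_comm, hδk, ← pow_mul]
      norm_num [hδ4]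
    have h1 := hB (δ*x) y
    have h2 := hB x (δ^2*y)
    have hx2 := hx (δ^2*y)
    rw [h2] at hx2
    rw [h1]
    have harg : a*(((δ*x)^(2:ℕ)^l)*y + (δ*x)*(y^(2:ℕ)^l))
        + b*(((δ*x)^(2:ℕ)^k)*y + (δ*x)*(y^(2:ℕ)^k))
        = a*((x^(2:ℕ)^l)*(δ^2*y) + x*((δ^2*y)^(2:ℕ)^l))
        + b*((x^(2:ℕ)^k)*(δ^2*y) + x*((δ^2*y)^(2:ℕ)^k)) := by
      rw [mul_pow δ x, mul_pow δ x, mul_pow (δ^2) y, mul_pow (δ^2) y,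
        hδl, hδk, hδl2, hδk2]
      ring
    rw [harg]
    exact hx2
  -- Part 3
  have part3 : V.card ≤ 16 := by
    set N : ℕ := 2^e with hNdef
    set α : F := a^(2:ℕ)^(2*e) with hαdef
    set β : F := (b + b^(2:ℕ)^k)^((2:ℕ)^l * 2^(2*e)) with hβdef
    set γ : F := a^(2:ℕ)^(l+2*e) with hγdef
    have hα : α ≠ 0 := pow_ne_zero _ ha
    have hγ : γ ≠ 0 := pow_ne_zero _ ha
    have hker' : ∀ x ∈ V, γ * x + β * x^N + α * (x^N)^N = 0 := by
      intro x hx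
      linear_combination hker x hx
    have hNadd : ∀ x y : F, (x+y)^N = x^N + y^N := by
      intro x y
      rw [hNdef]
      exact hfr e x y
    set Rt : Finset F := Finset.univ.filter (fun z : F => z^4 = z) with hRtdef
    have hRtcard : Rt.card ≤ 4 := by
      apply aux_card_four
      intro z hz
      rw [hRtdef, Finset.mem_filter] at hz
      exact hz.2
    by_cases h0 : ∀ x ∈ V, x = 0
    · have hsub : V ⊆ {0} := fun x hx => Finset.mem_singleton.mpr (h0 x hx)
      calc V.card ≤ ({0} : Finset F).card := Finset.card_le_card hsub
        _ ≤ 16 := by simp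
    · push_neg at h0
      obtain ⟨u, hu, hune⟩ := h0
      set φ : F → F := fun x => x^N * u + x * u^N with hφdef
      have hu' := hker' u hu
      have hQk : ∀ x ∈ V, (α * (u^N)^N) * (φ x)^N + (γ * (u^N)^N) * (φ x) = 0 := by
        intro x hx
        have hx' := hker' x hx
        have hexpand : (φ x)^N = (x^N)^N * u^N + x^N * (u^N)^N := by
          show (x^N * u + x * u^N)^N = _
          rw [hNadd, mul_pow, mul_pow]
        rw [hexpand]
        show (α * (u^N)^N) * ((x^N)^N * u^N + x^N * (u^N)^N)
          + (γ * (u^N)^N) * (x^N * u + x * u^N) = 0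
        linear_combination ((u^N)^N * u^N) * hx' + ((u^N)^N * x^N) * hu'
          - (β * x^N * u^N * (u^N)^N) * htwoF
      set B2 : F := α * (u^N)^N with hB2def
      set B0 : F := γ * (u^N)^N with hB0def
      have hB2 : B2 ≠ 0 := mul_ne_zero hα (pow_ne_zero _ (pow_ne_zero _ hune))
      have hB0 : B0 ≠ 0 := mul_ne_zero hγ (pow_ne_zero _ (pow_ne_zero _ hune))
      -- image bound
      have himg : (V.image φ).card ≤ 4 := by
        by_cases hz : ∀ z ∈ V.image φ, z = 0
        · have hsub : V.image φ ⊆ {0} := fun z hzm => Finset.mem_singleton.mpr (hz z hzm)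
          calc (V.image φ).card ≤ ({0}:Finset F).card := Finset.card_le_card hsub
            _ ≤ 4 := by simp
        · push_neg at hz
          obtain ⟨z₀, hz₀m, hz₀⟩ := hz
          have hrel : ∀ z ∈ V.image φ, B2 * z^N + B0 * z = 0 := by
            intro z hzm
            obtain ⟨x, hx, rfl⟩ := Finset.mem_image.mp hzm
            exact hQk x hx
          have h₀ := hrel z₀ hz₀m
          refine le_trans (Finset.card_le_card_of_injOn (fun z => z * z₀⁻¹) ?_ ?_) hRtcard
          · intro z hzm
            have h₁ := hrel z hzm
            have hc2 : B2 * (z^N * z₀) = B2 * (z * z₀^N) := by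
              linear_combination z₀ * h₁ - z * h₀
            have hkey : z^N * z₀ = z * z₀^N := mul_left_cancel₀ hB2 hc2
            dsimp only
            rw [hRtdef, Finset.mem_coe, Finset.mem_filter]
            refine ⟨Finset.mem_univ _, hfix _ ?_⟩
            rw [mul_pow, inv_pow]
            have hz₀N : z₀^N ≠ 0 := pow_ne_zero _ hz₀
            field_simp
            linear_combination hkey
          · intro z _ z' _ h
            exact mul_right_cancel₀ (inv_ne_zero hz₀) h
      -- fiber bound
      have hfib : ∀ z ∈ V.image φ, (V.filter (fun x => φ x = z)).card ≤ 4 := by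
        intro z hzm
        by_cases hne : (V.filter (fun x => φ x = z)).Nonempty
        · obtain ⟨x₁, hx₁⟩ := hne
          have hx₁φ := (Finset.mem_filter.mp hx₁).2
          refine le_trans (Finset.card_le_card_of_injOn (fun x => (x + x₁) * u⁻¹) ?_ ?_) hRtcard
          · intro x hxm
            have hxφ := (Finset.mem_filter.mp hxm).2
            have heq : x^N * u + x * u^N = x₁^N * u + x₁ * u^N := by
              have h := hxφ.trans hx₁φ.symm
              simpa only [hφdef] using h
            have hkey : (x + x₁)^N * u = (x + x₁) * u^N := by
              rw [hNadd]
              linear_combination heq + (x₁^N*u - x*u^N)*htwoF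
            dsimp only
            rw [hRtdef, Finset.mem_coe, Finset.mem_filter]
            refine ⟨Finset.mem_univ _, hfix _ ?_⟩
            rw [mul_pow, inv_pow]
            have huN : u^N ≠ 0 := pow_ne_zero _ hune
            field_simp
            linear_combination hkey
          · intro z1 _ z2 _ h
            have := mul_right_cancel₀ (inv_ne_zero hune) h
            exact add_right_cancel this
        · rw [Finset.not_nonempty_iff_eq_empty] at hne
          simp [hne]
      calc V.card ≤ 4 * (V.image φ).card := Finset.card_le_mul_card_image V 4 hfib
        _ ≤ 4 * 4 := by omega
        _ ≤ 16 := by norm_num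
  exact ⟨part1, part2, part3⟩
end

section
/- Let k be odd, q = 2^{2k}, g a primitive element of GF(q), and r = g^{2^k-1}. Then r is not a cube in GF(q)*, and consequently the three maps x ↦ x^{2^l+1}, x ↦ r x^{2^l+1}, x ↦ r^{-1} x^{2^l+1} (for odd l coprime to k) jointly cover each element of GF(q) exactly three times as x ranges over GF(q). -/
/-!
Since `2 ^ l + 1` divides `2 ^ (2 * l) - 1`, its gcd with `q - 1 = 2 ^ (2 * k) - 1` divides
`2 ^ gcd (2 * l) (2 * k) - 1 = 3`, and it equals `3` because `l` is odd. Hence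
`x ↦ x ^ (2 ^ l + 1)` is three-to-one from `GF(q)ˣ` onto the cubes, and `g ^ a` is a cube exactly
when `3 ∣ a`. With `e = 2 ^ k - 1 ≡ 1 [MOD 3]`, `r = g ^ e` is not a cube, and of `r⁻¹ * c = g ^ b`,
`c = g ^ (e + b)`, `r * c = g ^ (2 * e + b)` exactly one is a cube; so each `c ≠ 0` is hit by
exactly one of the three maps, three times, while `0` is hit once by each.
-/

open Finset

theorem three_dvd_two_pow_add_one {m : ℕ} (hm : Odd m) : 3 ∣ 2 ^ m + 1 := by
  obtain ⟨j, rfl⟩ := hm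
  rw [Nat.dvd_iff_mod_eq_zero, Nat.add_mod, pow_succ, pow_mul, Nat.mul_mod, Nat.pow_mod]
  norm_num

theorem gcd_two_pow_add_one_two_pow_two_mul_sub_one {l k : ℕ} (hl : Odd l) (hlk : l.Coprime k) :
    (2 ^ l + 1).gcd (2 ^ (2 * k) - 1) = 3 := by
  have hsq : 2 ^ l + 1 ∣ 2 ^ (2 * l) - 1 :=
    ⟨2 ^ l - 1, by rw [mul_comm 2, pow_mul, ← Nat.sq_sub_sq, one_pow]⟩
  have hdvd3 : (2 ^ l + 1).gcd (2 ^ (2 * k) - 1) ∣ 3 := by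
    have := Nat.gcd_dvd_gcd_of_dvd_left (2 ^ (2 * k) - 1) hsq
    rwa [Nat.pow_sub_one_gcd_pow_sub_one, Nat.gcd_mul_left, hlk] at this
  refine Nat.dvd_antisymm hdvd3 (Nat.dvd_gcd (three_dvd_two_pow_add_one hl) ?_)
  simpa [pow_mul] using Nat.sub_dvd_pow_sub_pow 4 1 k

theorem Fintype.card_sub_one_ne_zero {α : Type*} [Fintype α] [Nontrivial α] :
    Fintype.card α - 1 ≠ 0 := by
  have := Fintype.one_lt_card (α := α)
  omega

theorem card_filter_pow_eq_zero {M₀ : Type*} [MonoidWithZero M₀] [NoZeroDivisors M₀]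
    [Fintype M₀] [DecidableEq M₀] {n : ℕ} (hn : n ≠ 0) : #{x : M₀ | x ^ n = 0} = 1 := by
  simp [pow_eq_zero_iff hn, filter_eq']

theorem card_filter_pow_eq_of_pow_eq {G₀ : Type*} [CommGroupWithZero G₀] [Fintype G₀]
    [DecidableEq G₀] {n : ℕ} {x₀ c : G₀} (hx₀ : x₀ ≠ 0) (h : x₀ ^ n = c) :
    #{x : G₀ | x ^ n = c} = #{x : G₀ | x ^ n = 1} :=
  card_equiv (Equiv.mulLeft₀ x₀⁻¹ (inv_ne_zero hx₀)) fun x => by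
    simp [mul_pow, ← h, inv_mul_eq_one₀ (pow_ne_zero n hx₀), eq_comm]

namespace FiniteField

variable {F : Type*} [Field F] [Fintype F]

theorem isPrimitiveRoot_of_forall_ne_zero_eq_pow (hF : 2 < Fintype.card F) {g : F}
    (hg : ∀ x : F, x ≠ 0 → ∃ n : ℕ, x = g ^ n) :
    IsPrimitiveRoot g (Fintype.card F - 1) := by
  classical
  have hg0 : g ≠ 0 := by
    obtain ⟨x, -, hx⟩ := exists_mem_notMem_of_card_lt_card (t := univ)
      (s := {(0 : F), 1}) (card_le_two.trans_lt (by simpa using hF))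
    simp only [mem_insert, mem_singleton, not_or] at hx
    obtain ⟨n, rfl⟩ := hg x hx.1
    rintro rfl
    rcases n with _ | n <;> simp_all
  have hgen : ∀ u : Fˣ, u ∈ Subgroup.zpowers (Units.mk0 g hg0) := fun u => by
    obtain ⟨n, hn⟩ := hg u u.ne_zero
    exact ⟨n, Units.ext (by simp [hn])⟩
  have := IsPrimitiveRoot.coe_units_iff.mpr (IsPrimitiveRoot.orderOf (Units.mk0 g hg0))
  rwa [orderOf_eq_card_of_forall_mem_zpowers hgen, Nat.card_eq_fintype_card,
    Fintype.card_units, Units.val_mk0] at this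

theorem pow_eq_one_iff_pow_gcd_eq_one {n : ℕ} (hn : n ≠ 0) {x : F} :
    x ^ n = 1 ↔ x ^ n.gcd (Fintype.card F - 1) = 1 := by
  rcases eq_or_ne x 0 with rfl | hx
  · simp [hn, Nat.gcd_eq_zero_iff]
  · simp [pow_gcd_eq_one, pow_card_sub_one_eq_one x hx]

theorem exists_pow_eq_iff_exists_pow_gcd_eq {n : ℕ} {c : F} (hc : c ≠ 0) :
    (∃ x, x ^ n = c) ↔ ∃ y, y ^ n.gcd (Fintype.card F - 1) = c := by
  constructor
  · rintro ⟨x, rfl⟩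
    exact ⟨x ^ (n / n.gcd _), by rw [← pow_mul, Nat.div_mul_cancel (Nat.gcd_dvd_left _ _)]⟩
  · rintro ⟨y, rfl⟩
    have hy : y ≠ 0 := by
      rintro rfl
      exact hc (zero_pow (Nat.gcd_ne_zero_right Fintype.card_sub_one_ne_zero))
    -- Bézout: `gcd n (q - 1) = n * A + (q - 1) * B`, and `y ^ (q - 1) = 1`.
    refine ⟨y ^ n.gcdA (Fintype.card F - 1), ?_⟩
    rw [← zpow_natCast, ← zpow_natCast y, Nat.gcd_eq_gcd_ab, zpow_add₀ hy,
      zpow_mul y _ (Nat.gcdB _ _), zpow_natCast y, pow_card_sub_one_eq_one y hy, one_zpow,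
      mul_one, ← zpow_mul, mul_comm]

theorem exists_pow_eq_pow_iff_dvd {g : F} (hg : IsPrimitiveRoot g (Fintype.card F - 1)) {d : ℕ}
    (hd : d ∣ Fintype.card F - 1) (a : ℕ) : (∃ y, y ^ d = g ^ a) ↔ d ∣ a := by
  obtain ⟨m, hm⟩ := hd
  have hdm : d * m ≠ 0 := hm ▸ Fintype.card_sub_one_ne_zero
  constructor
  · rintro ⟨y, hy⟩
    have hy0 : y ≠ 0 := by
      rintro rfl
      rw [zero_pow (left_ne_zero_of_mul hdm)] at hy
      exact pow_ne_zero a (hg.ne_zero Fintype.card_sub_one_ne_zero) hy.symm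
    have : g ^ (a * m) = 1 := by
      rw [pow_mul, ← hy, ← pow_mul, ← hm, pow_card_sub_one_eq_one y hy0]
    rw [hg.pow_eq_one_iff_dvd, hm] at this
    exact Nat.dvd_of_mul_dvd_mul_right (Nat.pos_of_ne_zero (right_ne_zero_of_mul hdm)) this
  · rintro ⟨t, rfl⟩
    exact ⟨g ^ t, by rw [← pow_mul, mul_comm]⟩

theorem card_filter_pow_eq [DecidableEq F] {g : F} (hg : IsPrimitiveRoot g (Fintype.card F - 1))
    {n : ℕ} (hn : n ≠ 0) {c : F} (hc : c ≠ 0) :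
    #{x : F | x ^ n = c} =
      if ∃ y, y ^ n.gcd (Fintype.card F - 1) = c then n.gcd (Fintype.card F - 1) else 0 := by
  split_ifs with h
  · obtain ⟨x₀, hx₀⟩ := (exists_pow_eq_iff_exists_pow_gcd_eq hc).2 h
    have hx₀0 : x₀ ≠ 0 := by
      rintro rfl
      exact hc (by rw [← hx₀, zero_pow hn])
    obtain ⟨m, hm⟩ := Nat.gcd_dvd_right n (Fintype.card F - 1)
    have hm0 : m ≠ 0 := right_ne_zero_of_mul (hm ▸ Fintype.card_sub_one_ne_zero)
    have hζ : IsPrimitiveRoot (g ^ m) (n.gcd (Fintype.card F - 1)) := by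
      have := hg.pow_of_dvd hm0 (Dvd.intro_left _ hm.symm)
      rwa [hm, Nat.mul_div_cancel _ (Nat.pos_of_ne_zero hm0)] at this
    rw [card_filter_pow_eq_of_pow_eq hx₀0 hx₀, ← hζ.card_nthRootsFinset]
    congr 1
    ext x
    rw [mem_filter, pow_eq_one_iff_pow_gcd_eq_one hn,
      Polynomial.mem_nthRootsFinset (Nat.gcd_pos_of_pos_left _ (Nat.pos_of_ne_zero hn))]
    simp
  · rw [card_eq_zero, filter_eq_empty_iff]
    exact fun x _ hx => h ((exists_pow_eq_iff_exists_pow_gcd_eq hc).1 ⟨x, hx⟩)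

end FiniteField

open FiniteField

theorem noncube_and_triple_cover_general (k l : ℕ) (hk : Odd k) (hl : Odd l)
    (hco : Nat.Coprime l k)
    (F : Type) [Field F] [Fintype F] [DecidableEq F]
    (hF : Fintype.card F = 2 ^ (2 * k))
    (g : F) (hg : ∀ x : F, x ≠ 0 → ∃ n : ℕ, x = g ^ n)
    (r : F) (hr : r = g ^ (2 ^ k - 1)) :
    (¬ ∃ y : F, r = y ^ 3) ∧
    (∀ c : F,
      (Finset.univ.filter (fun x : F => x ^ (2 ^ l + 1) = c)).card
      + (Finset.univ.filter (fun x : F => r * x ^ (2 ^ l + 1) = c)).card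
      + (Finset.univ.filter (fun x : F => r⁻¹ * x ^ (2 ^ l + 1) = c)).card = 3) := by
  have hF2 : 2 < Fintype.card F := by
    rw [hF]
    calc 2 < 2 ^ 2 := by norm_num
      _ ≤ 2 ^ (2 * k) := Nat.pow_le_pow_right two_pos (by linarith [hk.pos])
  have hprim := isPrimitiveRoot_of_forall_ne_zero_eq_pow hF2 hg
  have hgcd : (2 ^ l + 1).gcd (Fintype.card F - 1) = 3 :=
    hF ▸ gcd_two_pow_add_one_two_pow_two_mul_sub_one hl hco
  have hcube : ∀ a, (∃ y, y ^ 3 = g ^ a) ↔ 3 ∣ a :=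
    exists_pow_eq_pow_iff_dvd hprim (hgcd ▸ Nat.gcd_dvd_right _ _)
  have he : (2 ^ k - 1) % 3 = 1 := by
    have := three_dvd_two_pow_add_one hk
    have := Nat.one_le_two_pow (n := k)
    omega
  have hr0 : r ≠ 0 := hr ▸ pow_ne_zero _ (hprim.ne_zero Fintype.card_sub_one_ne_zero)
  have hn : 2 ^ l + 1 ≠ 0 := by positivity
  refine ⟨fun ⟨y, hy⟩ => ?_, fun c => ?_⟩
  · have := (hcube _).1 ⟨y, hr ▸ hy.symm⟩
    omega
  simp_rw [← eq_inv_mul_iff_mul_eq₀ hr0, ← eq_inv_mul_iff_mul_eq₀ (inv_ne_zero hr0),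
    inv_inv]
  rcases eq_or_ne c 0 with rfl | hc
  · simp only [mul_zero, card_filter_pow_eq_zero hn]
  obtain ⟨b, hb⟩ := hg (r⁻¹ * c) (by simp [hr0, hc])
  have hc' : c = g ^ (2 ^ k - 1 + b) := by
    rw [pow_add, ← hr, ← hb, mul_inv_cancel_left₀ hr0]
  have hrc : r * c = g ^ (2 * (2 ^ k - 1) + b) := by rw [hc', hr, ← pow_add]; ring_nf
  rw [card_filter_pow_eq hprim hn hc, card_filter_pow_eq hprim hn (by simp [hr0, hc]),
    card_filter_pow_eq hprim hn (by simp [hr0, hc]), hgcd, hb, hrc, hc']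
  simp only [hcube]
  split_ifs <;> omega

theorem noncube_and_triple_cover (k l : ℕ) (hk : Odd k) (hl : Odd l) (hl0 : 0 < l)
    (hco : Nat.Coprime l k)
    (F : Type) [Field F] [Fintype F] [DecidableEq F]
    (hF : Fintype.card F = 2 ^ (2 * k))
    (g : F) (hg : ∀ x : F, x ≠ 0 → ∃ n : ℕ, x = g ^ n)
    (r : F) (hr : r = g ^ (2 ^ k - 1)) :
    (¬ ∃ y : F, r = y ^ 3) ∧
    (∀ c : F,
      (Finset.univ.filter (fun x : F => x ^ (2 ^ l + 1) = c)).card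
      + (Finset.univ.filter (fun x : F => r * x ^ (2 ^ l + 1) = c)).card
      + (Finset.univ.filter (fun x : F => r⁻¹ * x ^ (2 ^ l + 1) = c)).card = 3) :=
  noncube_and_triple_cover_general k l hk hl hco F hF g hg r hr
end
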